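/- Let x_{B1} ∈ H₃ be the bi-separable Bell state given by x_{B1}(a,b,c) = 1/√2 if (a,b,c) ∈ {(0,0,0),(0,1,1)} and 0 otherwise, and let X_{B1} be the topological closure in H₃ of its SLOCC class {λ·(A₁⊗A₂⊗A₃)x_{B1} : A₁,A₂,A₃ ∈ SL(2,ℂ), λ ∈ ℂ, λ ≠ 0}. Then the set {(p₁(v), p₂(v), p₃(v)) : v ∈ X_{B1}, ‖v‖ = 1} ⊆ ℝ³ is equal to the line segment {(0, t, t) : t ∈ [0, 1/2]}. -/

import Mathlib

open scoped BigOperators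

/-- The three-qubit Hilbert space. -/
abbrev H3 := (Fin 2 × Fin 2 × Fin 2) → ℂ

/-- Squared Hermitian norm of a vector in `H3`. -/
noncomputable def normSq3 (v : H3) : ℝ := ∑ x : Fin 2 × Fin 2 × Fin 2, Complex.normSq (v x)

/-- First one-qubit reduced density matrix. -/
noncomputable def rho1 (v : H3) : Matrix (Fin 2) (Fin 2) ℂ :=
  Matrix.of fun a a' => ∑ b : Fin 2, ∑ c : Fin 2, v (a, b, c) * star (v (a', b, c))

/-- Second one-qubit reduced density matrix. -/
noncomputable def rho2 (v : H3) : Matrix (Fin 2) (Fin 2) ℂ :=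
  Matrix.of fun b b' => ∑ a : Fin 2, ∑ c : Fin 2, v (a, b, c) * star (v (a, b', c))

/-- Third one-qubit reduced density matrix. -/
noncomputable def rho3 (v : H3) : Matrix (Fin 2) (Fin 2) ℂ :=
  Matrix.of fun c c' => ∑ a : Fin 2, ∑ b : Fin 2, v (a, b, c) * star (v (a, b, c'))

/-- Minimal (real) eigenvalue of a 2×2 complex matrix. -/
noncomputable def minEig (ρ : Matrix (Fin 2) (Fin 2) ℂ) : ℝ :=
  sInf {t : ℝ | (t : ℂ) ∈ spectrum ℂ ρ}

noncomputable def p1 (v : H3) : ℝ := minEig (rho1 v)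
noncomputable def p2 (v : H3) : ℝ := minEig (rho2 v)
noncomputable def p3 (v : H3) : ℝ := minEig (rho3 v)

/-- The action of a triple of 2×2 matrices on `H3` by the tensor product. -/
noncomputable def tensor3 (A1 A2 A3 : Matrix (Fin 2) (Fin 2) ℂ) (v : H3) : H3 :=
  fun x => ∑ a' : Fin 2, ∑ b' : Fin 2, ∑ c' : Fin 2,
    A1 x.1 a' * A2 x.2.1 b' * A3 x.2.2 c' * v (a', b', c')

/-- Local unitary equivalence of three-qubit states. -/
def LUequiv (v w : H3) : Prop :=
  ∃ U1 U2 U3 : Matrix (Fin 2) (Fin 2) ℂ,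
    U1 ∈ Matrix.unitaryGroup (Fin 2) ℂ ∧ U2 ∈ Matrix.unitaryGroup (Fin 2) ℂ ∧
    U3 ∈ Matrix.unitaryGroup (Fin 2) ℂ ∧ w = tensor3 U1 U2 U3 v

/-- The three-qubit W state. -/
noncomputable def wState : H3 := fun x =>
  if (x.1 = 1 ∧ x.2.1 = 0 ∧ x.2.2 = 0) ∨ (x.1 = 0 ∧ x.2.1 = 1 ∧ x.2.2 = 0) ∨
      (x.1 = 0 ∧ x.2.1 = 0 ∧ x.2.2 = 1)
  then ((1 / Real.sqrt 3 : ℝ) : ℂ) else 0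

/-- The SLOCC class of the W state. -/
def WClass : Set H3 :=
  {v | ∃ (A1 A2 A3 : Matrix (Fin 2) (Fin 2) ℂ) (l : ℂ),
    A1.det = 1 ∧ A2.det = 1 ∧ A3.det = 1 ∧ l ≠ 0 ∧ v = l • tensor3 A1 A2 A3 wState}

/-- The bi-separable Bell state `x_{B1}`. -/
noncomputable def xB1 : H3 := fun x =>
  if x = ((0 : Fin 2), (0 : Fin 2), (0 : Fin 2)) ∨ x = ((0 : Fin 2), (1 : Fin 2), (1 : Fin 2))
  then ((1 / Real.sqrt 2 : ℝ) : ℂ) else 0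

/-- The SLOCC class of `x_{B1}`. -/
def B1Class : Set H3 :=
  {v | ∃ (A1 A2 A3 : Matrix (Fin 2) (Fin 2) ℂ) (l : ℂ),
    A1.det = 1 ∧ A2.det = 1 ∧ A3.det = 1 ∧ l ≠ 0 ∧ v = l • tensor3 A1 A2 A3 xB1}

/-!
The state `x_{B1}` is `|0⟩ ⊗ (Bell state)`, so every `(A₁ ⊗ A₂ ⊗ A₃) x_{B1}` has vanishing minors
`v(0,b,c) v(1,b',c') - v(1,b,c) v(0,b',c')`; this closed condition passes to the closure, where
it says that `v = f ⊗ g` is a product across the first qubit. Then `ρ₁` has rank one, and `ρ₂`,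
`ρ₃` have the same determinant `‖f‖⁴ |det g|²`. A trace-one positive semidefinite 2×2 matrix has
smallest eigenvalue `(1 - √(1 - 4 det)) / 2` with `0 ≤ det ≤ 1/4`, so `p₁ = 0` and
`p₂ = p₃ ∈ [0, 1/2]`. Conversely `√(1-t) |000⟩ + √t |011⟩` is `x_{B1}` acted on by
`diag(r, r⁻¹)` on the second qubit when `t > 0`, and a limit of such states when `t = 0`;
its `p₂` is `min (1 - t) t = t`.
-/

open scoped ComplexOrder Matrix

section Gram

variable {m α β : Type*} [Fintype α] [Fintype β]

noncomputable def gram (u : m → α → β → ℂ) : Matrix m m ℂ :=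
  Matrix.of fun i j => ∑ x, ∑ y, u i x y * star (u j x y)

lemma gram_eq_mul_conjTranspose (u : m → α → β → ℂ) :
    gram u = Matrix.of (fun i (p : α × β) => u i p.1 p.2) *
      (Matrix.of fun i (p : α × β) => u i p.1 p.2)ᴴ := by
  ext i j
  simp [gram, Matrix.mul_apply, Fintype.sum_prod_type]

lemma gram_posSemidef [Finite m] (u : m → α → β → ℂ) : (gram u).PosSemidef := by
  rw [gram_eq_mul_conjTranspose]
  exact Matrix.posSemidef_self_mul_conjTranspose _

lemma trace_gram [Fintype m] (u : m → α → β → ℂ) :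
    (gram u).trace = ∑ i, ∑ x, ∑ y, (Complex.normSq (u i x y) : ℂ) := by
  simp [gram, Matrix.trace, Complex.mul_conj]

end Gram

section TwoByTwo

variable {ρ : Matrix (Fin 2) (Fin 2) ℂ}

lemma minEig_eq_of_trace_of_det {d : ℝ} (htr : ρ.trace = 1) (hdet : ρ.det = d)
    (hd : 4 * d ≤ 1) :
    minEig ρ = (1 - √(1 - 4 * d)) / 2 := by
  set s := √(1 - 4 * d)
  have hs : (s : ℂ) ^ 2 = 1 - 4 * d := by
    rw [← Complex.ofReal_pow, Real.sq_sqrt (by linarith)]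
    push_cast; ring
  have hspec : {t : ℝ | (t : ℂ) ∈ spectrum ℂ ρ} = {(1 - s) / 2, (1 + s) / 2} := by
    ext t
    have hfactor : (t : ℂ) ^ 2 - ρ.trace * t + ρ.det =
        (t - ((1 - s) / 2 : ℝ)) * (t - ((1 + s) / 2 : ℝ)) := by
      rw [htr, hdet]; push_cast; linear_combination (1 / 4 : ℂ) * hs
    simp only [Set.mem_ofPred_eq, Matrix.mem_spectrum_iff_isRoot_charpoly, Matrix.charpoly_fin_two,
      Polynomial.IsRoot.def, Polynomial.eval_add, Polynomial.eval_sub, Polynomial.eval_mul,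
      Polynomial.eval_pow, Polynomial.eval_X, Polynomial.eval_C, hfactor, mul_eq_zero, sub_eq_zero,
      Complex.ofReal_inj, Set.mem_insert_iff, Set.mem_singleton_iff]
  rw [minEig, hspec, csInf_pair, min_eq_left (by linarith [Real.sqrt_nonneg (1 - 4 * d)])]

lemma Matrix.PosSemidef.exists_det_eq_of_trace_eq_one (hρ : ρ.PosSemidef) (htr : ρ.trace = 1) :
    ∃ d : ℝ, ρ.det = d ∧ 0 ≤ d ∧ 4 * d ≤ 1 := by
  have hsum := hρ.1.trace_eq_sum_eigenvalues
  have h0 := hρ.eigenvalues_nonneg 0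
  have h1 := hρ.eigenvalues_nonneg 1
  rw [htr, Fin.sum_univ_two] at hsum
  refine ⟨hρ.1.eigenvalues 0 * hρ.1.eigenvalues 1, ?_, by positivity, ?_⟩
  · rw [hρ.1.det_eq_prod_eigenvalues, Fin.prod_univ_two]; push_cast; rfl
  · have : hρ.1.eigenvalues 0 + hρ.1.eigenvalues 1 = 1 := by
      simpa using congrArg Complex.re hsum.symm
    nlinarith [sq_nonneg (hρ.1.eigenvalues 0 - hρ.1.eigenvalues 1)]

lemma minEig_eq_of_posSemidef (hρ : ρ.PosSemidef) (htr : ρ.trace = 1) :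
    minEig ρ = (1 - √(1 - 4 * ρ.det.re)) / 2 := by
  obtain ⟨d, hdet, -, hd⟩ := hρ.exists_det_eq_of_trace_eq_one htr
  rw [minEig_eq_of_trace_of_det htr hdet hd, hdet, Complex.ofReal_re]

lemma minEig_mem_Icc_of_posSemidef (hρ : ρ.PosSemidef) (htr : ρ.trace = 1) :
    minEig ρ ∈ Set.Icc (0 : ℝ) (1 / 2) := by
  obtain ⟨d, hdet, hd0, hd⟩ := hρ.exists_det_eq_of_trace_eq_one htr
  rw [minEig_eq_of_trace_of_det htr hdet hd]
  have : √(1 - 4 * d) ≤ 1 := Real.sqrt_le_one.mpr (by linarith)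
  constructor <;> linarith [Real.sqrt_nonneg (1 - 4 * d)]

end TwoByTwo

section ReducedDensityMatrices

variable (v : H3)

lemma rho1_eq_gram : rho1 v = gram fun a b c => v (a, b, c) := rfl
lemma rho2_eq_gram : rho2 v = gram fun b a c => v (a, b, c) := rfl
lemma rho3_eq_gram : rho3 v = gram fun c a b => v (a, b, c) := rfl

lemma posSemidef_rho2 : (rho2 v).PosSemidef := gram_posSemidef _
lemma posSemidef_rho3 : (rho3 v).PosSemidef := gram_posSemidef _

lemma normSq3_eq_sum : normSq3 v = ∑ a, ∑ b, ∑ c, Complex.normSq (v (a, b, c)) := by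
  simp only [normSq3, Fintype.sum_prod_type]

lemma trace_rho1 : (rho1 v).trace = normSq3 v := by
  rw [rho1_eq_gram, trace_gram, normSq3_eq_sum]
  push_cast; rfl

lemma trace_rho2 : (rho2 v).trace = normSq3 v := by
  rw [rho2_eq_gram, trace_gram, normSq3_eq_sum, Finset.sum_comm]
  push_cast; rfl

lemma trace_rho3 : (rho3 v).trace = normSq3 v := by
  rw [rho3_eq_gram, trace_gram, normSq3_eq_sum, Finset.sum_comm]
  push_cast
  exact Finset.sum_congr rfl fun _ _ => Finset.sum_comm

end ReducedDensityMatrices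

section ProductStates

variable {v : H3} {f : Fin 2 → ℂ} {g : Fin 2 → Fin 2 → ℂ}

lemma det_rho1_eq_zero_of_product (hv : ∀ a b c, v (a, b, c) = f a * g b c) :
    (rho1 v).det = 0 := by
  simp only [rho1, Matrix.det_fin_two, Matrix.of_apply, hv, Fin.sum_univ_two, star_mul']
  ring

lemma det_rho2_eq_det_rho3_of_product (hv : ∀ a b c, v (a, b, c) = f a * g b c) :
    (rho2 v).det = (rho3 v).det := by
  simp only [rho2, rho3, Matrix.det_fin_two, Matrix.of_apply, hv, Fin.sum_univ_two, star_mul']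
  ring

lemma p1_eq_zero_of_product (hn : normSq3 v = 1) (hv : ∀ a b c, v (a, b, c) = f a * g b c) :
    p1 v = 0 := by
  have htr : (rho1 v).trace = 1 := by rw [trace_rho1, hn, Complex.ofReal_one]
  have hdet : (rho1 v).det = (0 : ℝ) := by rw [det_rho1_eq_zero_of_product hv, Complex.ofReal_zero]
  rw [p1, minEig_eq_of_trace_of_det htr hdet (by norm_num)]
  norm_num

lemma p3_eq_p2_of_product (hn : normSq3 v = 1) (hv : ∀ a b c, v (a, b, c) = f a * g b c) :
    p3 v = p2 v := by
  have htr2 : (rho2 v).trace = 1 := by rw [trace_rho2, hn, Complex.ofReal_one]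
  have htr3 : (rho3 v).trace = 1 := by rw [trace_rho3, hn, Complex.ofReal_one]
  rw [p2, p3, minEig_eq_of_posSemidef (posSemidef_rho2 v) htr2,
    minEig_eq_of_posSemidef (posSemidef_rho3 v) htr3,
    det_rho2_eq_det_rho3_of_product hv]

end ProductStates

lemma minor_eq_of_mem_closure_B1Class {v : H3} (hv : v ∈ closure B1Class) (b c b' c' : Fin 2) :
    v (0, b, c) * v (1, b', c') = v (1, b, c) * v (0, b', c') := by
  have hclosed : IsClosed {w : H3 | ∀ b c b' c' : Fin 2,
      w (0, b, c) * w (1, b', c') = w (1, b, c) * w (0, b', c')} := by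
    simp only [Set.ofPred_forall]
    exact isClosed_iInter fun _ => isClosed_iInter fun _ => isClosed_iInter fun _ =>
      isClosed_iInter fun _ => isClosed_eq (by fun_prop) (by fun_prop)
  refine closure_minimal ?_ hclosed hv b c b' c'
  rintro w ⟨A1, A2, A3, l, -, -, -, -, rfl⟩ b c b' c'
  simp only [Pi.smul_apply, smul_eq_mul, tensor3, xB1, Fin.sum_univ_two]
  norm_num [Prod.ext_iff]
  ring

lemma exists_product_of_mem_closure_B1Class {v : H3} (hv : v ∈ closure B1Class) :
    ∃ (f : Fin 2 → ℂ) (g : Fin 2 → Fin 2 → ℂ), ∀ a b c, v (a, b, c) = f a * g b c := by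
  by_cases hzero : ∀ b c, v (0, b, c) = 0
  · refine ⟨![0, 1], fun b c => v (1, b, c), fun a b c => ?_⟩
    match a with
    | 0 => simpa using hzero b c
    | 1 => simp
  · push Not at hzero
    obtain ⟨b₀, c₀, hne⟩ := hzero
    refine ⟨fun a => v (a, b₀, c₀), fun b c => v (0, b, c) / v (0, b₀, c₀), fun a b c => ?_⟩
    match a with
    | 0 => field_simp
    | 1 =>
      have := minor_eq_of_mem_closure_B1Class hv b c b₀ c₀
      field_simp
      linear_combination -this

section DiagonalStates

noncomputable def diagState (α β : ℂ) : H3 := fun x =>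
  if x = (0, 0, 0) then α else if x = (0, 1, 1) then β else 0

lemma smul_tensor3_diagonal_xB1 (l r r' : ℂ) :
    l • tensor3 1 (Matrix.diagonal ![r, r']) 1 xB1 =
      diagState (l * r / √2) (l * r' / √2) := by
  funext ⟨a, b, c⟩
  fin_cases a <;> fin_cases b <;> fin_cases c <;>
    simp [tensor3, xB1, diagState, Fin.sum_univ_two, Matrix.one_apply, Matrix.diagonal_apply] <;>
    ring

lemma diagState_mem_B1Class {α β : ℂ} (hα : α ≠ 0) (hβ : β ≠ 0) : diagState α β ∈ B1Class := by
  set s := (α * β) ^ (2⁻¹ : ℂ)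
  have hs : s ^ 2 = α * β := Complex.cpow_ofNat_inv_pow _ 2
  have hs0 : s ≠ 0 := by
    rintro h
    simp [h, hα, hβ] at hs
  refine ⟨1, Matrix.diagonal ![α / s, s / α], 1, √2 * s, Matrix.det_one, ?_, Matrix.det_one,
    by simp [hs0], ?_⟩
  · simp [Matrix.det_diagonal, Fin.prod_univ_two]
    field_simp
  · rw [smul_tensor3_diagonal_xB1]
    congr 1 <;> field_simp
    linear_combination -hs

lemma continuous_diagState (α : ℂ) : Continuous (diagState α) :=
  continuous_pi fun x => by
    simp only [diagState]
    split_ifs <;> fun_prop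

lemma diagState_mem_closure_B1Class {α : ℂ} (hα : α ≠ 0) (β : ℂ) :
    diagState α β ∈ closure B1Class := by
  have himage : diagState α '' {0}ᶜ ⊆ B1Class := by
    rintro _ ⟨β', hβ', rfl⟩
    exact diagState_mem_B1Class hα hβ'
  have h := image_closure_subset_closure_image (continuous_diagState α) (s := {0}ᶜ)
  rw [(dense_compl_singleton (0 : ℂ)).closure_eq] at h
  exact closure_mono himage (h ⟨β, trivial, rfl⟩)

lemma normSq3_diagState (α β : ℂ) :
    normSq3 (diagState α β) = Complex.normSq α + Complex.normSq β := by
  simp [normSq3_eq_sum, diagState, Fin.sum_univ_two]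

lemma det_rho2_diagState (α β : ℂ) :
    (rho2 (diagState α β)).det = (Complex.normSq α * Complex.normSq β : ℝ) := by
  simp [rho2, diagState, Matrix.det_fin_two, Fin.sum_univ_two, Complex.mul_conj]

lemma p2_diagState {α β : ℂ} (h : Complex.normSq α + Complex.normSq β = 1) :
    p2 (diagState α β) = min (Complex.normSq α) (Complex.normSq β) := by
  have htr : (rho2 (diagState α β)).trace = 1 := by
    rw [trace_rho2, normSq3_diagState, h, Complex.ofReal_one]
  have hdisc : 1 - 4 * (Complex.normSq α * Complex.normSq β) =
      (Complex.normSq α - Complex.normSq β) ^ 2 := by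
    linear_combination (-(Complex.normSq α + Complex.normSq β + 1)) * h
  rw [p2, minEig_eq_of_posSemidef (posSemidef_rho2 _) htr, det_rho2_diagState, Complex.ofReal_re,
    hdisc, Real.sqrt_sq_eq_abs]
  rcases le_total (Complex.normSq α) (Complex.normSq β) with hle | hle
  · rw [abs_of_nonpos (by linarith), min_eq_left hle]; linarith
  · rw [abs_of_nonneg (by linarith), min_eq_right hle]; linarith

end DiagonalStates

theorem kirwan_polytope_of_B1_closure :
    {q : ℝ × ℝ × ℝ | ∃ v : H3, v ∈ closure B1Class ∧ normSq3 v = 1 ∧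
        q = (p1 v, p2 v, p3 v)} =
      {q : ℝ × ℝ × ℝ | ∃ t ∈ Set.Icc (0 : ℝ) (1 / 2), q = (0, t, t)} := by
  ext q
  constructor
  · rintro ⟨v, hv, hn, rfl⟩
    obtain ⟨f, g, hfg⟩ := exists_product_of_mem_closure_B1Class hv
    have htr : (rho2 v).trace = 1 := by rw [trace_rho2, hn, Complex.ofReal_one]
    exact ⟨p2 v, minEig_mem_Icc_of_posSemidef (posSemidef_rho2 v) htr,
      by rw [p1_eq_zero_of_product hn hfg, p3_eq_p2_of_product hn hfg]⟩
  · rintro ⟨t, ⟨ht0, ht1⟩, rfl⟩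
    set v := diagState (√(1 - t) : ℝ) (√t : ℝ)
    have hα : Complex.normSq (√(1 - t) : ℝ) = 1 - t := by
      rw [Complex.normSq_ofReal, Real.mul_self_sqrt (by linarith)]
    have hβ : Complex.normSq (√t : ℝ) = t := by
      rw [Complex.normSq_ofReal, Real.mul_self_sqrt ht0]
    have hv : v ∈ closure B1Class :=
      diagState_mem_closure_B1Class (by simp [Real.sqrt_eq_zero']; linarith) _
    have hn : normSq3 v = 1 := by rw [normSq3_diagState, hα, hβ]; ring
    have hp2 : p2 v = t := by
      rw [p2_diagState (by rw [hα, hβ]; ring), hα, hβ, min_eq_right (by linarith)]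
    obtain ⟨f, g, hfg⟩ := exists_product_of_mem_closure_B1Class hv
    exact ⟨v, hv, hn, by rw [p1_eq_zero_of_product hn hfg, p3_eq_p2_of_product hn hfg, hp2]⟩
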